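/- If the popularity p is nonincreasing (p_1 ≥ p_2 ≥ … ≥ p_N), then there exists an optimal placement q* minimizing R_l over {q ∈ [0,1]^N : Σ q_j ≤ M} that is nonincreasing: q*_1 ≥ q*_2 ≥ … ≥ q*_N. -/

import Mathlib

def Feasible {N : ℕ} (M : ℝ) (q : Fin N → ℝ) : Prop :=
  (∀ j, q j ∈ Set.Icc (0:ℝ) 1) ∧ ∑ j, q j ≤ M

/-!
The objective is continuous and the feasible set is compact, so a minimiser `q₀` exists.
Sorting `q₀` into nonincreasing order keeps it feasible, and by the rearrangement inequality it
does not increase the objective: each term `p j * max (1 - d * q j) 0` pairs the antitone `p`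
with an antitone function of `q j`, so the sum is smallest when `q` is antitone as well.
-/

open Finset OrderDual

def sortAnti {n : ℕ} {α : Type*} [LinearOrder α] (q : Fin n → α) : Fin n → α :=
  q ∘ Tuple.sort (toDual ∘ q)

theorem antitone_sortAnti {n : ℕ} {α : Type*} [LinearOrder α] (q : Fin n → α) :
    Antitone (sortAnti q) :=
  monotone_toDual_comp_iff.mp (Tuple.monotone_sort (toDual ∘ q))

theorem sum_mul_comp_sortAnti_le {n : ℕ} {p : Fin n → ℝ} (hp : Antitone p) {g : ℝ → ℝ}
    (hg : Antitone g) (q : Fin n → ℝ) :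
    ∑ j, p j * g (sortAnti q j) ≤ ∑ j, p j * g (q j) := by
  have hpg : Antivary p (g ∘ sortAnti q) := hp.antivary (hg.comp (antitone_sortAnti q))
  -- `q` is `sortAnti q` composed with the inverse of the sorting permutation.
  simpa [sortAnti] using hpg.sum_mul_le_sum_mul_comp_perm (σ := (Tuple.sort (toDual ∘ q))⁻¹)

theorem sum_sum_mul_comp_sortAnti_le {n : ℕ} {κ : Type*} [Fintype κ] {γ : κ → ℝ}
    (hγ : ∀ d, 0 ≤ γ d) {p : Fin n → ℝ} (hp : Antitone p) {g : κ → ℝ → ℝ}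
    (hg : ∀ d, Antitone (g d)) (q : Fin n → ℝ) :
    ∑ d, ∑ j, γ d * p j * g d (sortAnti q j) ≤ ∑ d, ∑ j, γ d * p j * g d (q j) := by
  refine sum_le_sum fun d _ => ?_
  simp only [mul_assoc, ← mul_sum]
  exact mul_le_mul_of_nonneg_left (sum_mul_comp_sortAnti_le hp (hg d) q) (hγ d)

theorem Feasible.comp_perm {N : ℕ} {M : ℝ} {q : Fin N → ℝ} (hq : Feasible M q)
    (σ : Equiv.Perm (Fin N)) : Feasible M (q ∘ σ) :=
  ⟨fun j => hq.1 (σ j), (Equiv.sum_comp σ q).trans_le hq.2⟩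

theorem feasible_zero {N : ℕ} {M : ℝ} (hM : 0 ≤ M) : Feasible M (0 : Fin N → ℝ) :=
  ⟨fun _ => ⟨le_rfl, zero_le_one⟩, by simpa using hM⟩

theorem isCompact_setOf_feasible (N : ℕ) (M : ℝ) : IsCompact {q : Fin N → ℝ | Feasible M q} := by
  have hK : {q : Fin N → ℝ | Feasible M q} =
      Set.univ.pi (fun _ => Set.Icc 0 1) ∩ {q | ∑ j, q j ≤ M} := by
    ext q
    simp only [Feasible, Set.mem_ofPred_eq, Set.mem_inter_iff, Set.mem_univ_pi]
  rw [hK]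
  exact (isCompact_univ_pi fun _ => isCompact_Icc).inter_right
    (isClosed_le (by fun_prop) continuous_const)

theorem antitone_max_one_sub_mul_zero {c : ℝ} (hc : 0 ≤ c) :
    Antitone fun x : ℝ => max (1 - c * x) 0 :=
  fun _ _ hxy => max_le_max (by nlinarith) le_rfl

theorem stmt_14_general {N S : ℕ}
    (γ : Fin S → ℝ) (hγ : ∀ d, 0 ≤ γ d)
    (p : Fin N → ℝ)
    (hpmono : ∀ i j : Fin N, i ≤ j → p j ≤ p i)
    (M : ℝ) (hM0 : 0 < M) :
    ∃ qstar : Fin N → ℝ, Feasible M qstar ∧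
      (∀ q : Fin N → ℝ, Feasible M q →
        ∑ d : Fin S, ∑ j : Fin N,
            γ d * p j * max (1 - ((d.val + 1 : ℕ) : ℝ) * qstar j) 0 ≤
        ∑ d : Fin S, ∑ j : Fin N,
            γ d * p j * max (1 - ((d.val + 1 : ℕ) : ℝ) * q j) 0) ∧
      (∀ i j : Fin N, i ≤ j → qstar j ≤ qstar i) := by
  have hcont : Continuous fun q : Fin N → ℝ => ∑ d : Fin S, ∑ j : Fin N,
      γ d * p j * max (1 - ((d.val + 1 : ℕ) : ℝ) * q j) 0 := by
    fun_prop
  obtain ⟨q₀, hq₀, hmin⟩ := (isCompact_setOf_feasible N M).exists_isMinOn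
    ⟨0, feasible_zero hM0.le⟩ hcont.continuousOn
  refine ⟨sortAnti q₀, hq₀.comp_perm _, fun q hq => ?_, antitone_sortAnti q₀⟩
  exact (sum_sum_mul_comp_sortAnti_le hγ hpmono
    (fun d => antitone_max_one_sub_mul_zero (Nat.cast_nonneg _)) q₀).trans (hmin hq)

/-- If the popularity is nonincreasing then there exists a nonincreasing optimal
placement minimizing the legitimate-user rate over the feasible set. -/
theorem stmt_14 {N S : ℕ} (hN : 0 < N) (hS : 0 < S)
    (γ : Fin S → ℝ) (hγ : ∀ d, 0 ≤ γ d)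
    (p : Fin N → ℝ) (hp : ∀ j, 0 ≤ p j)
    (hpmono : ∀ i j : Fin N, i ≤ j → p j ≤ p i)
    (M : ℝ) (hM0 : 0 < M) :
    ∃ qstar : Fin N → ℝ, Feasible M qstar ∧
      (∀ q : Fin N → ℝ, Feasible M q →
        ∑ d : Fin S, ∑ j : Fin N,
            γ d * p j * max (1 - ((d.val + 1 : ℕ) : ℝ) * qstar j) 0 ≤
        ∑ d : Fin S, ∑ j : Fin N,
            γ d * p j * max (1 - ((d.val + 1 : ℕ) : ℝ) * q j) 0) ∧
      (∀ i j : Fin N, i ≤ j → qstar j ≤ qstar i) :=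
  stmt_14_general γ hγ p hpmono M hM0
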